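/- Let S be a finite type, let ρ₀ be a probability mass function on S, and let P¹, P² : S → PMF(S) be probability kernels satisfying D_TV(P¹(s), P²(s)) ≤ δ for every s ∈ S. Define the time-t state marginals by μⁱ₀ = ρ₀ and μⁱ_{t+1}(s') = ∑_{s ∈ S} μⁱ_t(s) · Pⁱ(s)(s') for i = 1, 2. Then for every t ∈ ℕ, D_TV(μ¹_t, μ²_t) ≤ t · δ. -/

import Mathlib

open scoped BigOperators

noncomputable def tv {X : Type*} [Fintype X] (p q : PMF X) : ℝ :=
  (1 / 2) * ∑ x, |(p x).toReal - (q x).toReal|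

/-!
Writing `μP − νQ = (μ − ν)P + ν(P − Q)`, the first term has
`ℓ¹` mass at most `‖μ − ν‖₁` because `P` is stochastic, and the second at most
`∑ₛ ν(s) ‖P(s) − Q(s)‖₁ ≤ 2δ`. Hence each step adds at most `δ` to the total variation
distance, and induction from the common initial law gives `t · δ`.
-/

open Finset

namespace PMF

theorem sum_toReal_eq_one {α : Type*} [Fintype α] (p : PMF α) : ∑ a, (p a).toReal = 1 := by
  rw [← ENNReal.toReal_sum fun a _ => p.apply_ne_top a, ← tsum_fintype (L := .unconditional _),
    p.tsum_coe, ENNReal.toReal_one]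

theorem toReal_apply_of_eq_sum_mul {α β : Type*} [Fintype α] {μ : PMF α} {μ' : PMF β}
    {P : α → PMF β} (hμ' : ∀ b, μ' b = ∑ a, μ a * P a b) (b : β) :
    (μ' b).toReal = ∑ a, (μ a).toReal * (P a b).toReal := by
  rw [hμ', ENNReal.toReal_sum fun a _ =>
    ENNReal.mul_ne_top (μ.apply_ne_top a) ((P a).apply_ne_top b)]
  simp only [ENNReal.toReal_mul]

end PMF

section TV

variable {X : Type*} [Fintype X]

theorem tv_self (p : PMF X) : tv p p = 0 := by
  simp [tv]

theorem two_mul_tv (p q : PMF X) : 2 * tv p q = ∑ x, |(p x).toReal - (q x).toReal| := by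
  rw [tv]
  ring

end TV

theorem abs_mul_sub_mul_le {R : Type*} [CommRing R] [LinearOrder R] [IsOrderedRing R]
    {a b c d : R} (hb : 0 ≤ b) (hc : 0 ≤ c) :
    |a * b - c * d| ≤ |a - c| * b + c * |b - d| := by
  calc |a * b - c * d| = |(a - c) * b + c * (b - d)| := by congr 1; ring
    _ ≤ |(a - c) * b| + |c * (b - d)| := abs_add_le _ _
    _ = |a - c| * b + c * |b - d| := by
      rw [abs_mul, abs_mul, abs_of_nonneg hb, abs_of_nonneg hc]

section KernelStep

variable {α β : Type*} [Fintype α] [Fintype β] {μ ν : PMF α} {μ' ν' : PMF β}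
  {P Q : α → PMF β}

theorem sum_abs_sub_le_of_eq_sum_mul (hμ' : ∀ b, μ' b = ∑ a, μ a * P a b)
    (hν' : ∀ b, ν' b = ∑ a, ν a * Q a b) :
    ∑ b, |(μ' b).toReal - (ν' b).toReal| ≤
      ∑ a, (|(μ a).toReal - (ν a).toReal| +
        (ν a).toReal * ∑ b, |(P a b).toReal - (Q a b).toReal|) :=
  calc ∑ b, |(μ' b).toReal - (ν' b).toReal|
      = ∑ b, |∑ a, ((μ a).toReal * (P a b).toReal - (ν a).toReal * (Q a b).toReal)| := by
        simp only [PMF.toReal_apply_of_eq_sum_mul hμ', PMF.toReal_apply_of_eq_sum_mul hν',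
          sum_sub_distrib]
    _ ≤ ∑ b, ∑ a, (|(μ a).toReal - (ν a).toReal| * (P a b).toReal +
          (ν a).toReal * |(P a b).toReal - (Q a b).toReal|) :=
        sum_le_sum fun b _ => (abs_sum_le_sum_abs _ _).trans <| sum_le_sum fun a _ =>
          abs_mul_sub_mul_le ENNReal.toReal_nonneg ENNReal.toReal_nonneg
    _ = _ := by
        rw [sum_comm]
        refine sum_congr rfl fun a _ => ?_
        rw [sum_add_distrib, ← mul_sum, ← mul_sum, (P a).sum_toReal_eq_one, mul_one]

theorem tv_le_tv_add_of_eq_sum_mul {δ : ℝ} (hPQ : ∀ a, tv (P a) (Q a) ≤ δ)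
    (hμ' : ∀ b, μ' b = ∑ a, μ a * P a b) (hν' : ∀ b, ν' b = ∑ a, ν a * Q a b) :
    tv μ' ν' ≤ tv μ ν + δ := by
  have hstep : ∑ a, (|(μ a).toReal - (ν a).toReal| +
      (ν a).toReal * ∑ b, |(P a b).toReal - (Q a b).toReal|) ≤
      ∑ a, (|(μ a).toReal - (ν a).toReal| + (ν a).toReal * (2 * δ)) :=
    sum_le_sum fun a _ => add_le_add_right (mul_le_mul_of_nonneg_left
      (by linarith [two_mul_tv (P a) (Q a), hPQ a]) ENNReal.toReal_nonneg) _
  have hsum := (sum_abs_sub_le_of_eq_sum_mul hμ' hν').trans hstep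
  rw [sum_add_distrib, ← sum_mul, ν.sum_toReal_eq_one, one_mul] at hsum
  linarith [two_mul_tv μ ν, two_mul_tv μ' ν']

end KernelStep

/-- If two Markov kernels satisfy `D_TV(P¹(s), P²(s)) ≤ δ` for every `s`,
then the state marginals of the two Markov chains started from the same initial
distribution `ρ₀` satisfy `D_TV(μ¹_t, μ²_t) ≤ t · δ` for every `t ∈ ℕ`. -/
theorem tv_marginals_le {S : Type*} [Fintype S]
    (ρ₀ : PMF S) (P₁ P₂ : S → PMF S) (δ : ℝ)
    (hP : ∀ s, tv (P₁ s) (P₂ s) ≤ δ)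
    (μ₁ μ₂ : ℕ → PMF S)
    (hμ₁0 : μ₁ 0 = ρ₀) (hμ₂0 : μ₂ 0 = ρ₀)
    (hμ₁ : ∀ t s', μ₁ (t + 1) s' = ∑ s, μ₁ t s * P₁ s s')
    (hμ₂ : ∀ t s', μ₂ (t + 1) s' = ∑ s, μ₂ t s * P₂ s s') :
    ∀ t : ℕ, tv (μ₁ t) (μ₂ t) ≤ t * δ := by
  intro t
  induction t with
  | zero => simp [hμ₁0, hμ₂0, tv_self]
  | succ t ih =>
    calc tv (μ₁ (t + 1)) (μ₂ (t + 1)) ≤ tv (μ₁ t) (μ₂ t) + δ :=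
          tv_le_tv_add_of_eq_sum_mul hP (hμ₁ t) (hμ₂ t)
      _ ≤ t * δ + δ := by linarith
      _ = (t + 1 : ℕ) * δ := by push_cast; ring
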